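/- Let Φ : Pic′ → Pic be the ℤ-linear map defined on the basis by Φ(H_q) = 2H_x + H_y − F₁ − F₃ − F₄ − F₇, Φ(H_p) = H_x + H_y − F₁ − F₇, Φ(E₁) = H_x − F₁, Φ(E₂) = F₂, Φ(E₃) = H_x − F₇, Φ(E₄) = F₈, Φ(E₅) = H_x + H_y − F₁ − F₄ − F₇, Φ(E₆) = H_x + H_y − F₁ − F₃ − F₇, Φ(E₇) = F₅, Φ(E₈) = F₆, and let Ψ : Pic → Pic′ be the ℤ-linear map defined by Ψ(H_x) = H_q + H_p − E₅ − E₆, Ψ(H_y) = H_q + 2H_p − E₁ − E₃ − E₅ − E₆, Ψ(F₁) = H_q + H_p − E₁ − E₅ − E₆, Ψ(F₂) = E₂, Ψ(F₃) = H_p − E₆, Ψ(F₄) = H_p − E₅, Ψ(F₅) = E₇, Ψ(F₆) = E₈, Ψ(F₇) = H_q + H_p − E₃ − E₅ − E₆, Ψ(F₈) = E₄. Then: (i) Ψ ∘ Φ and Φ ∘ Ψ are the identity maps; (ii) Φ preserves the intersection forms; (iii) Φ maps the standard surface roots to the Laguerre surface roots: Φ(E₁−E₂) = H_x−F₁−F₂,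 Φ(E₃−E₄) = H_x−F₇−F₈, Φ(H_q−E₁−E₃) = H_y−F₃−F₄, Φ(H_p−E₅−E₇) = F₄−F₅, Φ(E₅−E₆) = F₃−F₄, Φ(E₇−E₈) = F₅−F₆; and (iv) Φ maps the standard symmetry roots to the final Laguerre symmetry roots: Φ(H_p−E₁−E₂) = H_y−F₂−F₇, Φ(H_q−E₅−E₆) = F₁+F₇−H_y, Φ(H_p−E₃−E₄) = H_y−F₁−F₈, Φ(H_q−E₇−E₈) = 2H_x+H_y−F₁−F₃−F₄−F₅−F₆−F₇. -/

import Mathlib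

/-- The Picard lattice `Pic` of the blown-up surface: the free `ℤ`-module of rank 10 with basis
`H_x, H_y, F₁, …, F₈`. -/
abbrev Pic : Type := Fin 10 → ℤ

/-- The `i`-th basis vector of `Pic`. -/
def bv (i : Fin 10) : Pic := fun j => if j = i then 1 else 0

/-- The class `H_x` of a vertical line. -/
def Hx : Pic := bv 0

/-- The class `H_y` of a horizontal line. -/
def Hy : Pic := bv 1

/-- The class `F (k)` of the exceptional divisor `F_{k+1}` (so `F 0 = F₁`, …, `F 7 = F₈`). -/
def F (k : Fin 8) : Pic := bv ⟨k.val + 2, by omega⟩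

/-- The intersection form on `Pic`: `H_x•H_x = H_y•H_y = 0`, `H_x•H_y = 1`,
`H_x•F_i = H_y•F_i = 0`, `F_i•F_j = −δ_{ij}`. -/
def inter (v w : Pic) : ℤ :=
  v 0 * w 1 + v 1 * w 0 - ∑ k : Fin 8, v ⟨k.val + 2, by omega⟩ * w ⟨k.val + 2, by omega⟩


/-- The Picard lattice `Pic′` of the standard `D₅⁽¹⁾` Sakai surface: the free `ℤ`-module of
rank 10 with basis `H_q, H_p, E₁, …, E₈` (realized on the same underlying coordinate module,
with the same intersection form `inter`). -/
abbrev Pic' : Type := Fin 10 → ℤ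

/-- The class `H_q`. -/
def Hq : Pic' := bv 0

/-- The class `H_p`. -/
def Hp : Pic' := bv 1

/-- The class `E (k)` of the exceptional divisor `E_{k+1}` (so `E 0 = E₁`, …, `E 7 = E₈`). -/
def E (k : Fin 8) : Pic' := bv ⟨k.val + 2, by omega⟩

/-! Since `Φ`, `Ψ` and `inter` are (bi)linear, (i) and (ii) may be checked on the standard basis.
There (i) follows by composing the defining formulas of `Φ` and `Ψ`, and (ii) is the equality of
the Gram matrices of `Φ(H_q), Φ(H_p), Φ(E₁), …, Φ(E₈)` and of `H_q, H_p, E₁, …, E₈`, a finite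
integer computation; (iii) and (iv) are sums of the defining formulas of `Φ`. -/

theorem Module.Basis.leftInverse_of_apply_apply {ι R M N : Type*} [Semiring R]
    [AddCommMonoid M] [Module R M] [AddCommMonoid N] [Module R N] (b : Module.Basis ι R M)
    {Φ : M →ₗ[R] N} {Ψ : N →ₗ[R] M} (h : ∀ i, Ψ (Φ (b i)) = b i) :
    Function.LeftInverse Ψ Φ :=
  LinearMap.congr_fun (b.ext (f₁ := Ψ ∘ₗ Φ) (f₂ := LinearMap.id) h)

theorem Module.Basis.bilinForm_map_map_eq {ι R M N : Type*} [CommSemiring R]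
    [AddCommMonoid M] [Module R M] [AddCommMonoid N] [Module R N] (b : Module.Basis ι R M)
    {B : LinearMap.BilinForm R M} {B' : LinearMap.BilinForm R N} {Φ : M →ₗ[R] N}
    (h : ∀ i j, B' (Φ (b i)) (Φ (b j)) = B (b i) (b j)) (v w : M) :
    B' (Φ v) (Φ w) = B v w :=
  LinearMap.congr_fun₂ (LinearMap.ext_basis b b (B := B'.compl₁₂ Φ Φ) h) v w

theorem coe_basisFun_eq_bv : ⇑(Pi.basisFun ℤ (Fin 10)) = bv := by
  ext i j
  simp [bv, Pi.single_apply]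

theorem bv_eq_vecCons_Hq_Hp_E (i : Fin 10) :
    bv i = ![Hq, Hp, E 0, E 1, E 2, E 3, E 4, E 5, E 6, E 7] i := by
  fin_cases i <;> rfl

theorem bv_eq_vecCons_Hx_Hy_F (i : Fin 10) :
    bv i = ![Hx, Hy, F 0, F 1, F 2, F 3, F 4, F 5, F 6, F 7] i :=
  bv_eq_vecCons_Hq_Hp_E i

def interForm : LinearMap.BilinForm ℤ (Fin 10 → ℤ) :=
  LinearMap.mk₂ ℤ inter
    (fun u v w => by simp only [inter, Pi.add_apply, add_mul, Finset.sum_add_distrib]; ring)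
    (fun c v w => by
      simp only [inter, Pi.smul_apply, smul_eq_mul, mul_assoc, ← Finset.mul_sum]; ring)
    (fun u v w => by simp only [inter, Pi.add_apply, mul_add, Finset.sum_add_distrib]; ring)
    (fun c v w => by
      simp only [inter, Pi.smul_apply, smul_eq_mul, mul_left_comm _ c, ← Finset.mul_sum]; ring)

theorem interForm_apply (v w : Fin 10 → ℤ) : interForm v w = inter v w := rfl

/-- The final change of basis `Φ : Pic′ → Pic` of Lemma 7 of the paper and its
inverse `Ψ` are mutually inverse lattice isometries, `Φ` matches the standard surface root basis
with the Laguerre surface root basis, and `Φ` matches the standard symmetry root basis with the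
final Laguerre symmetry root basis. -/
theorem final_change_of_basis
    (Φ : Pic' →ₗ[ℤ] Pic) (Ψ : Pic →ₗ[ℤ] Pic')
    (hHq : Φ Hq = (2 : ℤ) • Hx + Hy - F 0 - F 2 - F 3 - F 6)
    (hHp : Φ Hp = Hx + Hy - F 0 - F 6)
    (hE1 : Φ (E 0) = Hx - F 0)
    (hE2 : Φ (E 1) = F 1)
    (hE3 : Φ (E 2) = Hx - F 6)
    (hE4 : Φ (E 3) = F 7)
    (hE5 : Φ (E 4) = Hx + Hy - F 0 - F 3 - F 6)
    (hE6 : Φ (E 5) = Hx + Hy - F 0 - F 2 - F 6)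
    (hE7 : Φ (E 6) = F 4)
    (hE8 : Φ (E 7) = F 5)
    (hHx : Ψ Hx = Hq + Hp - E 4 - E 5)
    (hHy : Ψ Hy = Hq + (2 : ℤ) • Hp - E 0 - E 2 - E 4 - E 5)
    (hF1 : Ψ (F 0) = Hq + Hp - E 0 - E 4 - E 5)
    (hF2 : Ψ (F 1) = E 1)
    (hF3 : Ψ (F 2) = Hp - E 5)
    (hF4 : Ψ (F 3) = Hp - E 4)
    (hF5 : Ψ (F 4) = E 6)
    (hF6 : Ψ (F 5) = E 7)
    (hF7 : Ψ (F 6) = Hq + Hp - E 2 - E 4 - E 5)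
    (hF8 : Ψ (F 7) = E 3) :
    (∀ v : Pic', Ψ (Φ v) = v) ∧ (∀ w : Pic, Φ (Ψ w) = w) ∧
    (∀ v w : Pic', inter (Φ v) (Φ w) = inter v w) ∧
    (Φ (E 0 - E 1) = Hx - F 0 - F 1 ∧
     Φ (E 2 - E 3) = Hx - F 6 - F 7 ∧
     Φ (Hq - E 0 - E 2) = Hy - F 2 - F 3 ∧
     Φ (Hp - E 4 - E 6) = F 3 - F 4 ∧
     Φ (E 4 - E 5) = F 2 - F 3 ∧
     Φ (E 6 - E 7) = F 4 - F 5) ∧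
    (Φ (Hp - E 0 - E 1) = Hy - F 1 - F 6 ∧
     Φ (Hq - E 4 - E 5) = F 0 + F 6 - Hy ∧
     Φ (Hp - E 2 - E 3) = Hy - F 0 - F 7 ∧
     Φ (Hq - E 6 - E 7) = (2 : ℤ) • Hx + Hy - F 0 - F 2 - F 3 - F 4 - F 5 - F 6) := by
  refine ⟨(Pi.basisFun ℤ (Fin 10)).leftInverse_of_apply_apply ?_,
    (Pi.basisFun ℤ (Fin 10)).leftInverse_of_apply_apply ?_,
    (Pi.basisFun ℤ (Fin 10)).bilinForm_map_map_eq (B := interForm) (B' := interForm) ?_, ?_, ?_⟩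
  · simp only [coe_basisFun_eq_bv, bv_eq_vecCons_Hq_Hp_E, Fin.forall_fin_succ,
      Matrix.cons_val_zero, Matrix.cons_val_succ, IsEmpty.forall_iff, and_true, true_and,
      map_add, map_sub, map_smul,
      hHq, hHp, hE1, hE2, hE3, hE4, hE5, hE6, hE7, hE8,
      hHx, hHy, hF1, hF2, hF3, hF4, hF5, hF6, hF7, hF8]
    and_intros <;> module
  · simp only [coe_basisFun_eq_bv, bv_eq_vecCons_Hx_Hy_F, Fin.forall_fin_succ,
      Matrix.cons_val_zero, Matrix.cons_val_succ, IsEmpty.forall_iff, and_true, true_and,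
      map_add, map_sub, map_smul,
      hHq, hHp, hE1, hE2, hE3, hE4, hE5, hE6, hE7, hE8,
      hHx, hHy, hF1, hF2, hF3, hF4, hF5, hF6, hF7, hF8]
    and_intros <;> module
  · simp only [coe_basisFun_eq_bv, interForm_apply, bv_eq_vecCons_Hq_Hp_E, Fin.forall_fin_succ,
      Matrix.cons_val_zero, Matrix.cons_val_succ, IsEmpty.forall_iff, and_true,
      hHq, hHp, hE1, hE2, hE3, hE4, hE5, hE6, hE7, hE8]
    and_intros <;> decide
  all_goals
    simp only [map_sub, hHq, hHp, hE1, hE2, hE3, hE4, hE5, hE6, hE7, hE8, true_and, and_true]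
    and_intros <;> module
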